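/- Let c be an integer and T_c = ℚ[a,b]/(b⁸, a⁴ + c·a³·b). Let P̃ = (1−b²)⁸·((1+a)⁴ + c·b·(1+a)³)·((1−a)⁴ − c·b·(1−a)³) ∈ T_c and for each i let p_i = (−1)ⁱ times the homogeneous degree-2i component of P̃ (with deg a = deg b = 1). Then p₁²·p₃ = −3c³(3c⁴ + 80c² + 352) · a³b⁷ in T_c. (Equivalently: the Pontryagin number p₁²p₃[Z²⁰_c] equals −3c³(3c⁴+80c²+352).) -/
import Mathlib


open MvPolynomial

namespace HW11

noncomputable def a : MvPolynomial (Fin 2) ℚ := X 0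
noncomputable def b : MvPolynomial (Fin 2) ℚ := X 1

noncomputable def I (c : ℤ) : Ideal (MvPolynomial (Fin 2) ℚ) :=
  Ideal.span {b ^ 8, a ^ 4 + C (c : ℚ) * (a ^ 3 * b)}

noncomputable def Pt (c : ℤ) : MvPolynomial (Fin 2) ℚ :=
  (1 - b ^ 2) ^ 8 * ((1 + a) ^ 4 + C (c : ℚ) * b * (1 + a) ^ 3) *
    ((1 - a) ^ 4 - C (c : ℚ) * b * (1 - a) ^ 3)

/-- `p c i` is `(-1)^i` times the homogeneous degree-`2*i` component of `Pt c`
(with `deg a = deg b = 1`), i.e. the `i`-th Pontryagin class. -/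
noncomputable def p (c : ℤ) (i : ℕ) : MvPolynomial (Fin 2) ℚ :=
  ((-1 : ℚ) ^ i) • homogeneousComponent (2 * i) (Pt c)

lemma isHom (r : ℚ) (i j : ℕ) :
    (C r * (X 0 ^ i * X 1 ^ j) : MvPolynomial (Fin 2) ℚ).IsHomogeneous (i + j) := by
  simpa using (isHomogeneous_C (Fin 2) r).mul
    (((isHomogeneous_X ℚ (0 : Fin 2)).pow i).mul ((isHomogeneous_X ℚ (1 : Fin 2)).pow j))

lemma hcomp (r : ℚ) (i j m : ℕ) :
    homogeneousComponent m (C r * (X 0 ^ i * X 1 ^ j) : MvPolynomial (Fin 2) ℚ) =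
      if m = i + j then C r * (X 0 ^ i * X 1 ^ j) else 0 :=
  homogeneousComponent_of_mem ((mem_homogeneousSubmodule _ _).2 (isHom r i j))

set_option maxHeartbeats 4000000 in
set_option maxRecDepth 8000 in
lemma hPt (c : ℤ) : Pt c =
    C ((1 : ℚ)) * (X 0 ^ 0 * X 1 ^ 0) +
    C ((-8 : ℚ)) * (X 0 ^ 0 * X 1 ^ 2) +
    C (((-1 : ℚ)) * (c : ℚ) ^ 2) * (X 0 ^ 0 * X 1 ^ 2) +
    C ((28 : ℚ)) * (X 0 ^ 0 * X 1 ^ 4) +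
    C (((8 : ℚ)) * (c : ℚ) ^ 2) * (X 0 ^ 0 * X 1 ^ 4) +
    C ((-56 : ℚ)) * (X 0 ^ 0 * X 1 ^ 6) +
    C (((-28 : ℚ)) * (c : ℚ) ^ 2) * (X 0 ^ 0 * X 1 ^ 6) +
    C ((70 : ℚ)) * (X 0 ^ 0 * X 1 ^ 8) +
    C (((56 : ℚ)) * (c : ℚ) ^ 2) * (X 0 ^ 0 * X 1 ^ 8) +
    C ((-56 : ℚ)) * (X 0 ^ 0 * X 1 ^ 10) +
    C (((-70 : ℚ)) * (c : ℚ) ^ 2) * (X 0 ^ 0 * X 1 ^ 10) +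
    C ((28 : ℚ)) * (X 0 ^ 0 * X 1 ^ 12) +
    C (((56 : ℚ)) * (c : ℚ) ^ 2) * (X 0 ^ 0 * X 1 ^ 12) +
    C ((-8 : ℚ)) * (X 0 ^ 0 * X 1 ^ 14) +
    C (((-28 : ℚ)) * (c : ℚ) ^ 2) * (X 0 ^ 0 * X 1 ^ 14) +
    C ((1 : ℚ)) * (X 0 ^ 0 * X 1 ^ 16) +
    C (((8 : ℚ)) * (c : ℚ) ^ 2) * (X 0 ^ 0 * X 1 ^ 16) +
    C (((-1 : ℚ)) * (c : ℚ) ^ 2) * (X 0 ^ 0 * X 1 ^ 18) +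
    C (((-2 : ℚ)) * (c : ℚ) ^ 1) * (X 0 ^ 1 * X 1 ^ 1) +
    C (((16 : ℚ)) * (c : ℚ) ^ 1) * (X 0 ^ 1 * X 1 ^ 3) +
    C (((-56 : ℚ)) * (c : ℚ) ^ 1) * (X 0 ^ 1 * X 1 ^ 5) +
    C (((112 : ℚ)) * (c : ℚ) ^ 1) * (X 0 ^ 1 * X 1 ^ 7) +
    C (((-140 : ℚ)) * (c : ℚ) ^ 1) * (X 0 ^ 1 * X 1 ^ 9) +
    C (((112 : ℚ)) * (c : ℚ) ^ 1) * (X 0 ^ 1 * X 1 ^ 11) +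
    C (((-56 : ℚ)) * (c : ℚ) ^ 1) * (X 0 ^ 1 * X 1 ^ 13) +
    C (((16 : ℚ)) * (c : ℚ) ^ 1) * (X 0 ^ 1 * X 1 ^ 15) +
    C (((-2 : ℚ)) * (c : ℚ) ^ 1) * (X 0 ^ 1 * X 1 ^ 17) +
    C ((-4 : ℚ)) * (X 0 ^ 2 * X 1 ^ 0) +
    C ((32 : ℚ)) * (X 0 ^ 2 * X 1 ^ 2) +
    C (((3 : ℚ)) * (c : ℚ) ^ 2) * (X 0 ^ 2 * X 1 ^ 2) +
    C ((-112 : ℚ)) * (X 0 ^ 2 * X 1 ^ 4) +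
    C (((-24 : ℚ)) * (c : ℚ) ^ 2) * (X 0 ^ 2 * X 1 ^ 4) +
    C ((224 : ℚ)) * (X 0 ^ 2 * X 1 ^ 6) +
    C (((84 : ℚ)) * (c : ℚ) ^ 2) * (X 0 ^ 2 * X 1 ^ 6) +
    C ((-280 : ℚ)) * (X 0 ^ 2 * X 1 ^ 8) +
    C (((-168 : ℚ)) * (c : ℚ) ^ 2) * (X 0 ^ 2 * X 1 ^ 8) +
    C ((224 : ℚ)) * (X 0 ^ 2 * X 1 ^ 10) +
    C (((210 : ℚ)) * (c : ℚ) ^ 2) * (X 0 ^ 2 * X 1 ^ 10) +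
    C ((-112 : ℚ)) * (X 0 ^ 2 * X 1 ^ 12) +
    C (((-168 : ℚ)) * (c : ℚ) ^ 2) * (X 0 ^ 2 * X 1 ^ 12) +
    C ((32 : ℚ)) * (X 0 ^ 2 * X 1 ^ 14) +
    C (((84 : ℚ)) * (c : ℚ) ^ 2) * (X 0 ^ 2 * X 1 ^ 14) +
    C ((-4 : ℚ)) * (X 0 ^ 2 * X 1 ^ 16) +
    C (((-24 : ℚ)) * (c : ℚ) ^ 2) * (X 0 ^ 2 * X 1 ^ 16) +
    C (((3 : ℚ)) * (c : ℚ) ^ 2) * (X 0 ^ 2 * X 1 ^ 18) +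
    C (((6 : ℚ)) * (c : ℚ) ^ 1) * (X 0 ^ 3 * X 1 ^ 1) +
    C (((-48 : ℚ)) * (c : ℚ) ^ 1) * (X 0 ^ 3 * X 1 ^ 3) +
    C (((168 : ℚ)) * (c : ℚ) ^ 1) * (X 0 ^ 3 * X 1 ^ 5) +
    C (((-336 : ℚ)) * (c : ℚ) ^ 1) * (X 0 ^ 3 * X 1 ^ 7) +
    C (((420 : ℚ)) * (c : ℚ) ^ 1) * (X 0 ^ 3 * X 1 ^ 9) +
    C (((-336 : ℚ)) * (c : ℚ) ^ 1) * (X 0 ^ 3 * X 1 ^ 11) +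
    C (((168 : ℚ)) * (c : ℚ) ^ 1) * (X 0 ^ 3 * X 1 ^ 13) +
    C (((-48 : ℚ)) * (c : ℚ) ^ 1) * (X 0 ^ 3 * X 1 ^ 15) +
    C (((6 : ℚ)) * (c : ℚ) ^ 1) * (X 0 ^ 3 * X 1 ^ 17) +
    C ((6 : ℚ)) * (X 0 ^ 4 * X 1 ^ 0) +
    C ((-48 : ℚ)) * (X 0 ^ 4 * X 1 ^ 2) +
    C (((-3 : ℚ)) * (c : ℚ) ^ 2) * (X 0 ^ 4 * X 1 ^ 2) +
    C ((168 : ℚ)) * (X 0 ^ 4 * X 1 ^ 4) +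
    C (((24 : ℚ)) * (c : ℚ) ^ 2) * (X 0 ^ 4 * X 1 ^ 4) +
    C ((-336 : ℚ)) * (X 0 ^ 4 * X 1 ^ 6) +
    C (((-84 : ℚ)) * (c : ℚ) ^ 2) * (X 0 ^ 4 * X 1 ^ 6) +
    C ((420 : ℚ)) * (X 0 ^ 4 * X 1 ^ 8) +
    C (((168 : ℚ)) * (c : ℚ) ^ 2) * (X 0 ^ 4 * X 1 ^ 8) +
    C ((-336 : ℚ)) * (X 0 ^ 4 * X 1 ^ 10) +
    C (((-210 : ℚ)) * (c : ℚ) ^ 2) * (X 0 ^ 4 * X 1 ^ 10) +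
    C ((168 : ℚ)) * (X 0 ^ 4 * X 1 ^ 12) +
    C (((168 : ℚ)) * (c : ℚ) ^ 2) * (X 0 ^ 4 * X 1 ^ 12) +
    C ((-48 : ℚ)) * (X 0 ^ 4 * X 1 ^ 14) +
    C (((-84 : ℚ)) * (c : ℚ) ^ 2) * (X 0 ^ 4 * X 1 ^ 14) +
    C ((6 : ℚ)) * (X 0 ^ 4 * X 1 ^ 16) +
    C (((24 : ℚ)) * (c : ℚ) ^ 2) * (X 0 ^ 4 * X 1 ^ 16) +
    C (((-3 : ℚ)) * (c : ℚ) ^ 2) * (X 0 ^ 4 * X 1 ^ 18) +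
    C (((-6 : ℚ)) * (c : ℚ) ^ 1) * (X 0 ^ 5 * X 1 ^ 1) +
    C (((48 : ℚ)) * (c : ℚ) ^ 1) * (X 0 ^ 5 * X 1 ^ 3) +
    C (((-168 : ℚ)) * (c : ℚ) ^ 1) * (X 0 ^ 5 * X 1 ^ 5) +
    C (((336 : ℚ)) * (c : ℚ) ^ 1) * (X 0 ^ 5 * X 1 ^ 7) +
    C (((-420 : ℚ)) * (c : ℚ) ^ 1) * (X 0 ^ 5 * X 1 ^ 9) +
    C (((336 : ℚ)) * (c : ℚ) ^ 1) * (X 0 ^ 5 * X 1 ^ 11) +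
    C (((-168 : ℚ)) * (c : ℚ) ^ 1) * (X 0 ^ 5 * X 1 ^ 13) +
    C (((48 : ℚ)) * (c : ℚ) ^ 1) * (X 0 ^ 5 * X 1 ^ 15) +
    C (((-6 : ℚ)) * (c : ℚ) ^ 1) * (X 0 ^ 5 * X 1 ^ 17) +
    C ((-4 : ℚ)) * (X 0 ^ 6 * X 1 ^ 0) +
    C ((32 : ℚ)) * (X 0 ^ 6 * X 1 ^ 2) +
    C (((1 : ℚ)) * (c : ℚ) ^ 2) * (X 0 ^ 6 * X 1 ^ 2) +
    C ((-112 : ℚ)) * (X 0 ^ 6 * X 1 ^ 4) +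
    C (((-8 : ℚ)) * (c : ℚ) ^ 2) * (X 0 ^ 6 * X 1 ^ 4) +
    C ((224 : ℚ)) * (X 0 ^ 6 * X 1 ^ 6) +
    C (((28 : ℚ)) * (c : ℚ) ^ 2) * (X 0 ^ 6 * X 1 ^ 6) +
    C ((-280 : ℚ)) * (X 0 ^ 6 * X 1 ^ 8) +
    C (((-56 : ℚ)) * (c : ℚ) ^ 2) * (X 0 ^ 6 * X 1 ^ 8) +
    C ((224 : ℚ)) * (X 0 ^ 6 * X 1 ^ 10) +
    C (((70 : ℚ)) * (c : ℚ) ^ 2) * (X 0 ^ 6 * X 1 ^ 10) +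
    C ((-112 : ℚ)) * (X 0 ^ 6 * X 1 ^ 12) +
    C (((-56 : ℚ)) * (c : ℚ) ^ 2) * (X 0 ^ 6 * X 1 ^ 12) +
    C ((32 : ℚ)) * (X 0 ^ 6 * X 1 ^ 14) +
    C (((28 : ℚ)) * (c : ℚ) ^ 2) * (X 0 ^ 6 * X 1 ^ 14) +
    C ((-4 : ℚ)) * (X 0 ^ 6 * X 1 ^ 16) +
    C (((-8 : ℚ)) * (c : ℚ) ^ 2) * (X 0 ^ 6 * X 1 ^ 16) +
    C (((1 : ℚ)) * (c : ℚ) ^ 2) * (X 0 ^ 6 * X 1 ^ 18) +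
    C (((2 : ℚ)) * (c : ℚ) ^ 1) * (X 0 ^ 7 * X 1 ^ 1) +
    C (((-16 : ℚ)) * (c : ℚ) ^ 1) * (X 0 ^ 7 * X 1 ^ 3) +
    C (((56 : ℚ)) * (c : ℚ) ^ 1) * (X 0 ^ 7 * X 1 ^ 5) +
    C (((-112 : ℚ)) * (c : ℚ) ^ 1) * (X 0 ^ 7 * X 1 ^ 7) +
    C (((140 : ℚ)) * (c : ℚ) ^ 1) * (X 0 ^ 7 * X 1 ^ 9) +
    C (((-112 : ℚ)) * (c : ℚ) ^ 1) * (X 0 ^ 7 * X 1 ^ 11) +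
    C (((56 : ℚ)) * (c : ℚ) ^ 1) * (X 0 ^ 7 * X 1 ^ 13) +
    C (((-16 : ℚ)) * (c : ℚ) ^ 1) * (X 0 ^ 7 * X 1 ^ 15) +
    C (((2 : ℚ)) * (c : ℚ) ^ 1) * (X 0 ^ 7 * X 1 ^ 17) +
    C ((1 : ℚ)) * (X 0 ^ 8 * X 1 ^ 0) +
    C ((-8 : ℚ)) * (X 0 ^ 8 * X 1 ^ 2) +
    C ((28 : ℚ)) * (X 0 ^ 8 * X 1 ^ 4) +
    C ((-56 : ℚ)) * (X 0 ^ 8 * X 1 ^ 6) +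
    C ((70 : ℚ)) * (X 0 ^ 8 * X 1 ^ 8) +
    C ((-56 : ℚ)) * (X 0 ^ 8 * X 1 ^ 10) +
    C ((28 : ℚ)) * (X 0 ^ 8 * X 1 ^ 12) +
    C ((-8 : ℚ)) * (X 0 ^ 8 * X 1 ^ 14) +
    C ((1 : ℚ)) * (X 0 ^ 8 * X 1 ^ 16)
  := by
  simp only [Pt, a, b, C_mul, map_pow, map_neg, map_ofNat, map_one]
  ring

set_option maxHeartbeats 2000000 in
set_option maxRecDepth 8000 in
lemma hp1 (c : ℤ) : p c 1 =
    C ((8 : ℚ)) * (X 0 ^ 0 * X 1 ^ 2) +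
    C (((1 : ℚ)) * (c : ℚ) ^ 2) * (X 0 ^ 0 * X 1 ^ 2) +
    C (((2 : ℚ)) * (c : ℚ) ^ 1) * (X 0 ^ 1 * X 1 ^ 1) +
    C ((4 : ℚ)) * (X 0 ^ 2 * X 1 ^ 0)
  := by
  rw [p, hPt]
  simp only [map_add, hcomp]
  norm_num

set_option maxHeartbeats 2000000 in
set_option maxRecDepth 8000 in
lemma hp3 (c : ℤ) : p c 3 =
    C ((56 : ℚ)) * (X 0 ^ 0 * X 1 ^ 6) +
    C (((28 : ℚ)) * (c : ℚ) ^ 2) * (X 0 ^ 0 * X 1 ^ 6) +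
    C (((56 : ℚ)) * (c : ℚ) ^ 1) * (X 0 ^ 1 * X 1 ^ 5) +
    C ((112 : ℚ)) * (X 0 ^ 2 * X 1 ^ 4) +
    C (((24 : ℚ)) * (c : ℚ) ^ 2) * (X 0 ^ 2 * X 1 ^ 4) +
    C (((48 : ℚ)) * (c : ℚ) ^ 1) * (X 0 ^ 3 * X 1 ^ 3) +
    C ((48 : ℚ)) * (X 0 ^ 4 * X 1 ^ 2) +
    C (((3 : ℚ)) * (c : ℚ) ^ 2) * (X 0 ^ 4 * X 1 ^ 2) +
    C (((6 : ℚ)) * (c : ℚ) ^ 1) * (X 0 ^ 5 * X 1 ^ 1) +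
    C ((4 : ℚ)) * (X 0 ^ 6 * X 1 ^ 0)
  := by
  rw [p, hPt]
  simp only [map_add, hcomp]
  norm_num

set_option maxHeartbeats 4000000 in
set_option maxRecDepth 8000 in
theorem pontryagin_number (c : ℤ) :
    Ideal.Quotient.mk (I c) (p c 1 ^ 2 * p c 3) =
      Ideal.Quotient.mk (I c) (C (-3 * (c : ℚ) ^ 3 * (3 * (c : ℚ) ^ 4 + 80 * (c : ℚ) ^ 2 + 352)) * (a ^ 3 * b ^ 7)) := by
  rw [Ideal.Quotient.eq, I, Ideal.mem_span_pair]
  refine ⟨C ((3584 : ℚ)) * (X 0 ^ 0 * X 1 ^ 2) +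
    C (((2688 : ℚ)) * (c : ℚ) ^ 2) * (X 0 ^ 0 * X 1 ^ 2) +
    C (((504 : ℚ)) * (c : ℚ) ^ 4) * (X 0 ^ 0 * X 1 ^ 2) +
    C (((28 : ℚ)) * (c : ℚ) ^ 6) * (X 0 ^ 0 * X 1 ^ 2) +
    C (((5376 : ℚ)) * (c : ℚ) ^ 1) * (X 0 ^ 1 * X 1 ^ 1) +
    C (((2016 : ℚ)) * (c : ℚ) ^ 3) * (X 0 ^ 1 * X 1 ^ 1) +
    C (((168 : ℚ)) * (c : ℚ) ^ 5) * (X 0 ^ 1 * X 1 ^ 1) +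
    C ((10752 : ℚ)) * (X 0 ^ 2 * X 1 ^ 0) +
    C (((7584 : ℚ)) * (c : ℚ) ^ 2) * (X 0 ^ 2 * X 1 ^ 0) +
    C (((1056 : ℚ)) * (c : ℚ) ^ 4) * (X 0 ^ 2 * X 1 ^ 0) +
    C (((24 : ℚ)) * (c : ℚ) ^ 6) * (X 0 ^ 2 * X 1 ^ 0),
    C ((11136 : ℚ)) * (X 0 ^ 0 * X 1 ^ 6) +
    C (((4160 : ℚ)) * (c : ℚ) ^ 2) * (X 0 ^ 0 * X 1 ^ 6) +
    C (((384 : ℚ)) * (c : ℚ) ^ 4) * (X 0 ^ 0 * X 1 ^ 6) +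
    C (((9 : ℚ)) * (c : ℚ) ^ 6) * (X 0 ^ 0 * X 1 ^ 6) +
    C (((2560 : ℚ)) * (c : ℚ) ^ 1) * (X 0 ^ 1 * X 1 ^ 5) +
    C (((192 : ℚ)) * (c : ℚ) ^ 3) * (X 0 ^ 1 * X 1 ^ 5) +
    C (((-6 : ℚ)) * (c : ℚ) ^ 5) * (X 0 ^ 1 * X 1 ^ 5) +
    C ((5120 : ℚ)) * (X 0 ^ 2 * X 1 ^ 4) +
    C (((1152 : ℚ)) * (c : ℚ) ^ 2) * (X 0 ^ 2 * X 1 ^ 4) +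
    C (((24 : ℚ)) * (c : ℚ) ^ 4) * (X 0 ^ 2 * X 1 ^ 4) +
    C (((1024 : ℚ)) * (c : ℚ) ^ 1) * (X 0 ^ 3 * X 1 ^ 3) +
    C (((40 : ℚ)) * (c : ℚ) ^ 3) * (X 0 ^ 3 * X 1 ^ 3) +
    C ((1024 : ℚ)) * (X 0 ^ 4 * X 1 ^ 2) +
    C (((96 : ℚ)) * (c : ℚ) ^ 2) * (X 0 ^ 4 * X 1 ^ 2) +
    C (((96 : ℚ)) * (c : ℚ) ^ 1) * (X 0 ^ 5 * X 1 ^ 1) +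
    C ((64 : ℚ)) * (X 0 ^ 6 * X 1 ^ 0), ?_⟩
  rw [hp1, hp3]
  simp only [a, b, C_mul, map_add, map_pow, map_neg, map_ofNat, map_one]
  ring

end HW11
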